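/- For every ε ∈ (0,1) and every y in the closed interval [y₁(ε), y₂(ε)], one has b(ε) − y² > 0. -/

import Mathlib

/-!
With `s = √(4 − 3ε²)`, the relation `s² = 4 − 3ε²` gives the factorisations
`16 (b − y₁²) = 6ε ((2ε − 1) s + 2 − ε)` and `16 (b − y₂²) = 6ε ((2ε + 1) s − (2 + ε))`.
Both factors are positive for `0 < ε < 1`: the first because `s < 2`, the second because
`(2ε + 1)² s² − (2 + ε)² = 12ε (1 − ε)(1 + ε)²`. Since `y²` is bounded on `[y₁, y₂]` by its
value at one of the endpoints, `b − y²` is positive on the whole interval.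
-/

/-- The parameter `b(ε) = 1/2 − ((1 − 3ε²)/4)·√(4 − 3ε²)` of the Sasaki–Einstein
metric `Y^{p,q}`, with `ε = q/p`. -/
noncomputable def ypqB (ε : ℝ) : ℝ :=
  1/2 - ((1 - 3*ε^2)/4) * Real.sqrt (4 - 3*ε^2)

/-- The endpoint `y₁(ε) = (2 − 3ε − √(4 − 3ε²))/4`. -/
noncomputable def ypqY1 (ε : ℝ) : ℝ := (2 - 3*ε - Real.sqrt (4 - 3*ε^2))/4

/-- The endpoint `y₂(ε) = (2 + 3ε − √(4 − 3ε²))/4`. -/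
noncomputable def ypqY2 (ε : ℝ) : ℝ := (2 + 3*ε - Real.sqrt (4 - 3*ε^2))/4

theorem sq_lt_of_mem_Icc {a c y b : ℝ} (hy : y ∈ Set.Icc a c) (ha : a ^ 2 < b)
    (hc : c ^ 2 < b) : y ^ 2 < b := by
  have hy_abs : |y| ≤ max |a| |c| := abs_le_max_abs_abs hy.1 hy.2
  rcases max_choice |a| |c| with h | h <;> rw [h] at hy_abs
  · exact (sq_le_sq.mpr hy_abs).trans_lt ha
  · exact (sq_le_sq.mpr hy_abs).trans_lt hc

section

variable {ε : ℝ}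

theorem sq_sqrt_four_sub_three_mul_sq (h : 3 * ε ^ 2 ≤ 4) :
    Real.sqrt (4 - 3 * ε ^ 2) ^ 2 = 4 - 3 * ε ^ 2 :=
  Real.sq_sqrt (by linarith)

theorem ypqB_sub_ypqY1_sq (h : 3 * ε ^ 2 ≤ 4) :
    ypqB ε - ypqY1 ε ^ 2 = 3 * ε / 8 * ((2 * ε - 1) * Real.sqrt (4 - 3 * ε ^ 2) + 2 - ε) := by
  unfold ypqB ypqY1
  linear_combination (-1 / 16 : ℝ) * sq_sqrt_four_sub_three_mul_sq h

theorem ypqB_sub_ypqY2_sq (h : 3 * ε ^ 2 ≤ 4) :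
    ypqB ε - ypqY2 ε ^ 2 =
      3 * ε / 8 * ((2 * ε + 1) * Real.sqrt (4 - 3 * ε ^ 2) - (2 + ε)) := by
  unfold ypqB ypqY2
  linear_combination (-1 / 16 : ℝ) * sq_sqrt_four_sub_three_mul_sq h

theorem sqrt_four_sub_three_mul_sq_lt_two (hε : 0 < ε) : Real.sqrt (4 - 3 * ε ^ 2) < 2 := by
  rw [Real.sqrt_lt' two_pos]
  nlinarith

theorem ypqY1_factor_pos (hε : ε ∈ Set.Ioo (0 : ℝ) 1) :
    0 < (2 * ε - 1) * Real.sqrt (4 - 3 * ε ^ 2) + 2 - ε := by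
  obtain ⟨hε0, hε1⟩ := hε
  have hs_lt := sqrt_four_sub_three_mul_sq_lt_two hε0
  have hs_nonneg := Real.sqrt_nonneg (4 - 3 * ε ^ 2)
  rcases le_or_gt (1 / 2 : ℝ) ε with h | h <;> nlinarith

theorem ypqY2_factor_pos (hε : ε ∈ Set.Ioo (0 : ℝ) 1) :
    0 < (2 * ε + 1) * Real.sqrt (4 - 3 * ε ^ 2) - (2 + ε) := by
  obtain ⟨hε0, hε1⟩ := hε
  have hs_sq := sq_sqrt_four_sub_three_mul_sq (by nlinarith : 3 * ε ^ 2 ≤ 4)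
  have hsq : (2 + ε) ^ 2 < ((2 * ε + 1) * Real.sqrt (4 - 3 * ε ^ 2)) ^ 2 := by
    have hgap : ((2 * ε + 1) * Real.sqrt (4 - 3 * ε ^ 2)) ^ 2 - (2 + ε) ^ 2
        = 12 * ε * (1 - ε) * (1 + ε) ^ 2 := by
      rw [mul_pow, hs_sq]; ring
    have : 0 < 12 * ε * (1 - ε) * (1 + ε) ^ 2 := by
      have := sub_pos.mpr hε1
      positivity
    linarith
  have hpos : 0 ≤ (2 * ε + 1) * Real.sqrt (4 - 3 * ε ^ 2) := by positivity
  exact sub_pos.mpr (lt_of_pow_lt_pow_left₀ 2 hpos hsq)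

end

/-- For every `ε ∈ (0,1)` and every `y ∈ [y₁(ε), y₂(ε)]`, one has `b(ε) − y² > 0`. -/
theorem ypq_b_sub_sq_pos :
    ∀ ε ∈ Set.Ioo (0 : ℝ) 1, ∀ y ∈ Set.Icc (ypqY1 ε) (ypqY2 ε),
      0 < ypqB ε - y^2 := by
  rintro ε hε y hy
  have hε_sq : 3 * ε ^ 2 ≤ 4 := by nlinarith [hε.1, hε.2]
  have hε8 : 0 < 3 * ε / 8 := by linarith [hε.1]
  have h1 : 0 < ypqB ε - ypqY1 ε ^ 2 := by
    rw [ypqB_sub_ypqY1_sq hε_sq]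
    exact mul_pos hε8 (ypqY1_factor_pos hε)
  have h2 : 0 < ypqB ε - ypqY2 ε ^ 2 := by
    rw [ypqB_sub_ypqY2_sq hε_sq]
    exact mul_pos hε8 (ypqY2_factor_pos hε)
  exact sub_pos.mpr (sq_lt_of_mem_Icc hy (sub_pos.mp h1) (sub_pos.mp h2))
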